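/- arXiv:1905.12489 — 3 statements merged into one kernel-verified Lean document; each statement's English description precedes it below -/
import Mathlib

section
/- Let C ≥ 1 and σ ≥ 4C⁴ be real numbers. Suppose a₀, …, a_{n−1} ≥ 0 and A ≥ 0 satisfy (Σᵢ aᵢ − C)/C ≤ A ≤ C·(Σᵢ aᵢ) + C. Then [A]_σ ≥ (1/(2C)) · Σᵢ [aᵢ]_{Cσ+C²}, where for reals t, s one sets [t]_s = t if t ≥ s and [t]_s = 0 otherwise. -/
/-- The threshold function: `[t]_s = t` if `t ≥ s` and `[t]_s = 0` otherwise. -/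
noncomputable def thresh (t s : ℝ) : ℝ := if s ≤ t then t else 0

/-- if `A` is coarsely (with constant `C`) the sum of the nonnegative
`aᵢ`, and `σ ≥ 4C⁴`, then `[A]_σ ≥ (1/(2C)) ⬝ Σᵢ [aᵢ]_{Cσ+C²}`. -/
theorem thresh_distribute (C σ : ℝ) (hC : 1 ≤ C) (hσ : 4 * C ^ 4 ≤ σ)
    (n : ℕ) (a : Fin n → ℝ) (ha : ∀ i, 0 ≤ a i) (A : ℝ) (hA : 0 ≤ A)
    (h1 : ((∑ i, a i) - C) / C ≤ A) (h2 : A ≤ C * (∑ i, a i) + C) :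
    (1 / (2 * C)) * ∑ i, thresh (a i) (C * σ + C ^ 2) ≤ thresh A σ := by
  have hC0 : (0:ℝ) < C := lt_of_lt_of_le one_pos hC
  set S := ∑ i, a i with hS
  have hS0 : 0 ≤ S := Finset.sum_nonneg fun i _ => ha i
  have hle : ∑ i, thresh (a i) (C * σ + C ^ 2) ≤ S := by
    apply Finset.sum_le_sum
    intro i _
    unfold thresh; split
    · exact le_refl _
    · exact ha i
  have hthA : 0 ≤ thresh A σ := by
    unfold thresh; split
    · exact hA
    · exact le_refl 0
  by_cases hz : ∑ i, thresh (a i) (C * σ + C ^ 2) = 0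
  · rw [hz, mul_zero]; exact hthA
  · have hex : ∃ i ∈ Finset.univ, thresh (a i) (C * σ + C ^ 2) ≠ 0 := by
      by_contra h
      push_neg at h
      exact hz (Finset.sum_eq_zero h)
    obtain ⟨i, _, hi⟩ := hex
    have hai : C * σ + C ^ 2 ≤ a i := by
      unfold thresh at hi
      split at hi
      · assumption
      · exact absurd rfl hi
    have hSbig : C * σ + C ^ 2 ≤ S :=
      le_trans hai (Finset.single_le_sum (fun j _ => ha j) (Finset.mem_univ i))
    have hA2 : S - C ≤ A * C := by
      rw [div_le_iff₀ hC0] at h1; linarith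
    have hσ0 : 0 ≤ σ := by nlinarith
    have hAσ : σ ≤ A := by nlinarith
    have hth : thresh A σ = A := by unfold thresh; rw [if_pos hAσ]
    rw [hth, div_mul_eq_mul_div, div_le_iff₀ (by linarith : (0:ℝ) < 2 * C)]
    have h4 : (1:ℝ) ≤ C ^ 4 := one_le_pow₀ hC
    have hS2C : 2 * C ≤ S := by nlinarith
    nlinarith [hle, hS2C, hA2]
end

section
/- Let ε > 0 and let (Γ, d) be a metric space in which any two distinct points are at distance at least ε. Let H(Γ) be the combinatorial horoball over Γ: the metric graph with vertex set Γ × ℕ, with an edge of length 1 joining (x,n) and (x,n+1) for each x ∈ Γ and n ∈ ℕ, and an edge of length e^{−n}·d(x,y) joining (x,n) and (y,n) for all distinct x,y ∈ Γ and n ∈ ℕ. Then there exists L ≥ 1, depending only on ε, such that for all x, y ∈ Γ, (1/L)·log(1 + d(x,y)) − L ≤ d_{H(Γ)}((x,0),(y,0)) ≤ L·log(1 + d(x,y)) + L. -/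
open scoped ENNReal Classical

/-- The total length of a chain (finite path) of vertices, where consecutive
vertices are charged according to the edge-weight function `w`
(`w u v = ⊤` when `u`, `v` are not joined by an edge). -/
noncomputable def chainCost {V : Type*} (w : V → V → ℝ≥0∞) : List V → ℝ≥0∞
  | [] => 0
  | [_] => 0
  | u :: v :: l => w u v + chainCost w (v :: l)

/-- The path metric of the weighted graph with edge-weight function `w`:
the infimum of the lengths of chains from `u` to `v`. -/
noncomputable def pathDist {V : Type*} (w : V → V → ℝ≥0∞) (u v : V) : ℝ≥0∞ :=
  ⨅ (l : List V) (_ : l.head? = some u) (_ : l.getLast? = some v), chainCost w l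

/-- The edge weights of the combinatorial horoball over a metric space `Γ`:
vertices are `Γ × ℕ`; `(x,n)` and `(x,n+1)` are joined by an edge of length `1`,
and for `x ≠ y`, `(x,n)` and `(y,n)` are joined by an edge of length
`e^{-n}·d(x,y)`. All other pairs are not joined (weight `⊤`). -/
noncomputable def horoballWeight (Γ : Type*) [MetricSpace Γ] :
    Γ × ℕ → Γ × ℕ → ℝ≥0∞ := fun p q =>
  if p.1 = q.1 ∧ (q.2 = p.2 + 1 ∨ p.2 = q.2 + 1) then 1
  else if p.2 = q.2 ∧ p.1 ≠ q.1 then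
    ENNReal.ofReal (Real.exp (-(p.2 : ℝ)) * dist p.1 q.1)
  else ⊤


/-!
Going up `n = ⌈log (1 + d(x,y))⌉` levels, the horizontal edge from `(x,n)` to `(y,n)` has length
`e^{-n} d(x,y) ≤ 1`, so `d_H((x,0),(y,0)) ≤ 2n + 1`. Conversely, the potential
`φ(z,n) = max (log (1 + d(x,z)) - n) 0` changes by at most the length of every edge: by at most `1`
along vertical edges, and by at most `e^{-n} d(z,z')` along horizontal ones because
`t ↦ max (log (1 + t) - n) 0` is `e^{-n}`-Lipschitz on `[0, ∞)`. Hence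
`d_H((x,0),(y,0)) ≥ φ(y,0) - φ(x,0) = log (1 + d(x,y))`.
-/

open Real

section PathDist

variable {V : Type*} (w : V → V → ℝ≥0∞)

lemma pathDist_le_chainCost (l : List V) {u v : V} (hu : l.head? = some u)
    (hv : l.getLast? = some v) : pathDist w u v ≤ chainCost w l :=
  iInf_le_of_le l (iInf_le_of_le hu (iInf_le _ hv))

lemma pathDist_self (u : V) : pathDist w u u = 0 :=
  nonpos_iff_eq_zero.1 (pathDist_le_chainCost w [u] rfl rfl)

lemma pathDist_le_weight (u v : V) : pathDist w u v ≤ w u v := by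
  simpa [chainCost] using pathDist_le_chainCost w [u, v] rfl rfl

lemma chainCost_append_cons (l t : List V) (m : V) :
    chainCost w (l ++ m :: t) = chainCost w (l ++ [m]) + chainCost w (m :: t) := by
  induction l with
  | nil => simp [chainCost]
  | cons a l ih =>
    cases l with
    | nil => simp [chainCost]
    | cons b r =>
      simp only [List.cons_append] at ih ⊢
      rw [chainCost, chainCost, ih, add_assoc]

lemma pathDist_triangle (u m v : V) : pathDist w u v ≤ pathDist w u m + pathDist w m v := by
  simp only [pathDist, ENNReal.iInf_add, ENNReal.add_iInf]
  refine le_iInf fun l₂ => le_iInf fun hm₂ => le_iInf fun hv => le_iInf fun l₁ =>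
    le_iInf fun hu => le_iInf fun hm₁ => ?_
  obtain ⟨l, rfl⟩ := List.getLast?_eq_some_iff.1 hm₁
  obtain ⟨t, rfl⟩ := List.head?_eq_some_iff.1 hm₂
  rw [← chainCost_append_cons]
  refine pathDist_le_chainCost w _ ?_ ?_
  · cases l <;> simpa using hu
  · rw [List.getLast?_append_of_ne_nil _ (List.cons_ne_nil m t)]
    exact hv

lemma pathDist_le_mul_of_forall_weight_le {c : ℝ≥0∞} (f : ℕ → V)
    (hf : ∀ k, w (f k) (f (k + 1)) ≤ c) (n : ℕ) : pathDist w (f 0) (f n) ≤ n * c := by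
  induction n with
  | zero => simp [pathDist_self]
  | succ n ih =>
    calc pathDist w (f 0) (f (n + 1))
        ≤ pathDist w (f 0) (f n) + pathDist w (f n) (f (n + 1)) := pathDist_triangle w _ _ _
      _ ≤ n * c + c := add_le_add ih ((pathDist_le_weight w _ _).trans (hf n))
      _ = (n + 1 : ℕ) * c := by push_cast; ring

lemma pathDist_le_mul_of_forall_weight_le_rev {c : ℝ≥0∞} (f : ℕ → V)
    (hf : ∀ k, w (f (k + 1)) (f k) ≤ c) (n : ℕ) : pathDist w (f n) (f 0) ≤ n * c := by
  induction n with
  | zero => simp [pathDist_self]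
  | succ n ih =>
    calc pathDist w (f (n + 1)) (f 0)
        ≤ pathDist w (f (n + 1)) (f n) + pathDist w (f n) (f 0) := pathDist_triangle w _ _ _
      _ ≤ c + n * c := add_le_add ((pathDist_le_weight w _ _).trans (hf n)) ih
      _ = (n + 1 : ℕ) * c := by push_cast; ring

variable {w}

lemma ofReal_abs_sub_le_chainCost {φ : V → ℝ}
    (hφ : ∀ u v, ENNReal.ofReal |φ u - φ v| ≤ w u v) :
    ∀ {l : List V} {u v : V}, l.head? = some u → l.getLast? = some v →
      ENNReal.ofReal |φ u - φ v| ≤ chainCost w l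
  | [], _, _, hu, _ => by simp at hu
  | [a], u, v, hu, hv => by
    obtain rfl : a = u := by simpa using hu
    obtain rfl : a = v := by simpa using hv
    simp
  | a :: b :: r, u, v, hu, hv => by
    obtain rfl : a = u := by simpa using hu
    have ih := ofReal_abs_sub_le_chainCost hφ (l := b :: r) rfl
      (by simpa [List.getLast?_cons_cons] using hv)
    calc ENNReal.ofReal |φ a - φ v|
        ≤ ENNReal.ofReal (|φ a - φ b| + |φ b - φ v|) :=
          ENNReal.ofReal_le_ofReal (abs_sub_le _ _ _)
      _ ≤ ENNReal.ofReal |φ a - φ b| + ENNReal.ofReal |φ b - φ v| := ENNReal.ofReal_add_le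
      _ ≤ w a b + chainCost w (b :: r) := add_le_add (hφ a b) ih

lemma ofReal_abs_sub_le_pathDist {φ : V → ℝ}
    (hφ : ∀ u v, ENNReal.ofReal |φ u - φ v| ≤ w u v) (u v : V) :
    ENNReal.ofReal |φ u - φ v| ≤ pathDist w u v :=
  le_iInf fun _ => le_iInf fun hu => le_iInf fun hv => ofReal_abs_sub_le_chainCost hφ hu hv

end PathDist

lemma log_sub_log_le_div {a b c : ℝ} (hc : 0 < c) (hca : c ≤ a) (hab : a ≤ b) :
    log b - log a ≤ (b - a) / c := by
  have ha : 0 < a := hc.trans_le hca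
  rw [← log_div (ha.trans_le hab).ne' ha.ne']
  calc log (b / a) ≤ b / a - 1 := log_le_sub_one_of_pos (div_pos (ha.trans_le hab) ha)
    _ = (b - a) / a := by field_simp
    _ ≤ (b - a) / c := div_le_div_of_nonneg_left (sub_nonneg.2 hab) hc hca

lemma max_log_sub_zero_eq {s : ℝ} (hs : 0 < s) (n : ℝ) :
    max (log s - n) 0 = log (max s (exp n)) - n := by
  rcases le_total s (exp n) with h | h
  · have := log_le_log hs h
    rw [log_exp] at this
    rw [max_eq_right h, log_exp, sub_self, max_eq_right (by linarith)]
  · have := log_le_log (exp_pos n) h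
    rw [log_exp] at this
    rw [max_eq_left h, max_eq_left (by linarith)]

lemma max_log_one_add_sub_le {s t : ℝ} (ht : 0 ≤ t) (hts : t ≤ s) (n : ℝ) :
    max (log (1 + s) - n) 0 - max (log (1 + t) - n) 0 ≤ exp (-n) * (s - t) := by
  rw [max_log_sub_zero_eq (by linarith) n, max_log_sub_zero_eq (by linarith) n]
  have hB : exp n ≤ max (1 + t) (exp n) := le_max_right _ _
  have hBA : max (1 + t) (exp n) ≤ max (1 + s) (exp n) := max_le_max_right _ (by linarith)
  have hAB : max (1 + s) (exp n) - max (1 + t) (exp n) ≤ s - t := by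
    rw [sub_le_iff_le_add]
    exact max_le (by linarith [le_max_left (1 + t) (exp n)]) (by linarith)
  calc log (max (1 + s) (exp n)) - n - (log (max (1 + t) (exp n)) - n)
      ≤ (max (1 + s) (exp n) - max (1 + t) (exp n)) / exp n := by
        linarith [log_sub_log_le_div (exp_pos n) hB hBA]
    _ ≤ (s - t) / exp n := div_le_div_of_nonneg_right hAB (exp_pos n).le
    _ = exp (-n) * (s - t) := by rw [exp_neg, div_eq_inv_mul]

lemma abs_max_log_one_add_sub_le {s t : ℝ} (hs : 0 ≤ s) (ht : 0 ≤ t) (n : ℝ) :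
    |max (log (1 + s) - n) 0 - max (log (1 + t) - n) 0| ≤ exp (-n) * |s - t| := by
  wlog hts : t ≤ s generalizing s t
  · rw [abs_sub_comm, abs_sub_comm s]
    exact this ht hs (le_of_not_ge hts)
  have hmono : max (log (1 + t) - n) 0 ≤ max (log (1 + s) - n) 0 :=
    max_le_max_right _ (sub_le_sub_right (log_le_log (by linarith) (by linarith)) n)
  rw [abs_of_nonneg (sub_nonneg.2 hmono), abs_of_nonneg (sub_nonneg.2 hts)]
  exact max_log_one_add_sub_le ht hts n

lemma exp_neg_mul_le_one {d t : ℝ} (hd : 0 ≤ d) (ht : log (1 + d) ≤ t) :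
    exp (-t) * d ≤ 1 := by
  rw [exp_neg, inv_mul_le_iff₀ (exp_pos t), mul_one]
  linarith [(log_le_iff_le_exp (by linarith)).1 ht]

section Horoball

variable {Γ : Type*} [MetricSpace Γ]

lemma log_one_add_dist_nonneg (x y : Γ) : 0 ≤ log (1 + dist x y) :=
  log_nonneg (le_add_of_nonneg_right dist_nonneg)

lemma horoballWeight_succ (x : Γ) (n : ℕ) : horoballWeight Γ (x, n) (x, n + 1) = 1 := by
  simp [horoballWeight]

lemma horoballWeight_succ_rev (x : Γ) (n : ℕ) : horoballWeight Γ (x, n + 1) (x, n) = 1 := by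
  simp [horoballWeight]

lemma horoballWeight_of_ne {x y : Γ} (hxy : x ≠ y) (n : ℕ) :
    horoballWeight Γ (x, n) (y, n) = ENNReal.ofReal (exp (-(n : ℝ)) * dist x y) := by
  simp [horoballWeight, hxy]

lemma pathDist_horoball_le_add (x y : Γ) (n : ℕ) :
    pathDist (horoballWeight Γ) (x, 0) (y, 0) ≤
      n + ENNReal.ofReal (exp (-(n : ℝ)) * dist x y) + n := by
  have hup : pathDist (horoballWeight Γ) (x, 0) (x, n) ≤ n := by
    simpa using pathDist_le_mul_of_forall_weight_le (horoballWeight Γ) (fun k => (x, k))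
      (fun k => (horoballWeight_succ x k).le) n
  have hdown : pathDist (horoballWeight Γ) (y, n) (y, 0) ≤ n := by
    simpa using pathDist_le_mul_of_forall_weight_le_rev (horoballWeight Γ) (fun k => (y, k))
      (fun k => (horoballWeight_succ_rev y k).le) n
  have hacross : pathDist (horoballWeight Γ) (x, n) (y, n) ≤
      ENNReal.ofReal (exp (-(n : ℝ)) * dist x y) := by
    by_cases hxy : x = y
    · simp [hxy, pathDist_self]
    · exact (pathDist_le_weight _ _ _).trans_eq (horoballWeight_of_ne hxy n)
  calc pathDist (horoballWeight Γ) (x, 0) (y, 0)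
      ≤ pathDist (horoballWeight Γ) (x, 0) (x, n) + pathDist (horoballWeight Γ) (x, n) (y, 0) :=
        pathDist_triangle _ _ _ _
    _ ≤ pathDist (horoballWeight Γ) (x, 0) (x, n) + (pathDist (horoballWeight Γ) (x, n) (y, n) +
          pathDist (horoballWeight Γ) (y, n) (y, 0)) := by gcongr; exact pathDist_triangle _ _ _ _
    _ ≤ _ := by rw [← add_assoc]; gcongr

lemma pathDist_horoball_le_log (x y : Γ) :
    pathDist (horoballWeight Γ) (x, 0) (y, 0) ≤ ENNReal.ofReal (2 * log (1 + dist x y) + 3) := by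
  set n := ⌈log (1 + dist x y)⌉₊
  have hlog := log_one_add_dist_nonneg x y
  have hn : (n : ℝ) ≤ log (1 + dist x y) + 1 := (Nat.ceil_lt_add_one hlog).le
  have hacross : exp (-(n : ℝ)) * dist x y ≤ 1 := exp_neg_mul_le_one dist_nonneg (Nat.le_ceil _)
  refine (pathDist_horoball_le_add x y n).trans ?_
  rw [← ENNReal.ofReal_natCast, ← ENNReal.ofReal_add (by positivity) (by positivity),
    ← ENNReal.ofReal_add (by positivity) (by positivity)]
  exact ENNReal.ofReal_le_ofReal (by linarith)

noncomputable def horoballPotential (x : Γ) (p : Γ × ℕ) : ℝ :=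
  max (log (1 + dist x p.1) - p.2) 0

lemma ofReal_abs_horoballPotential_sub_le (x : Γ) (p q : Γ × ℕ) :
    ENNReal.ofReal |horoballPotential x p - horoballPotential x q| ≤ horoballWeight Γ p q := by
  unfold horoballWeight horoballPotential
  split_ifs with hvert hhor
  · obtain ⟨hpq, hlevel⟩ := hvert
    rw [← ENNReal.ofReal_one, hpq]
    refine ENNReal.ofReal_le_ofReal ((abs_max_sub_max_le_abs _ _ _).trans ?_)
    rcases hlevel with h | h <;> simp [h]
  · obtain ⟨hlevel, -⟩ := hhor
    rw [hlevel]
    refine ENNReal.ofReal_le_ofReal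
      ((abs_max_log_one_add_sub_le dist_nonneg dist_nonneg _).trans ?_)
    gcongr
    simpa only [dist_comm x] using abs_dist_sub_le p.1 q.1 x
  · exact le_top

lemma ofReal_log_le_pathDist_horoball (x y : Γ) :
    ENNReal.ofReal (log (1 + dist x y)) ≤ pathDist (horoballWeight Γ) (x, 0) (y, 0) := by
  have hlog := log_one_add_dist_nonneg x y
  have h := ofReal_abs_sub_le_pathDist (ofReal_abs_horoballPotential_sub_le x) (x, 0) (y, 0)
  simpa [horoballPotential, max_eq_left hlog, abs_of_nonneg hlog] using h

end Horoball

/-- for an `ε`-separated space `Γ`, the distance in the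
combinatorial horoball `H(Γ)` between base points `(x,0)`, `(y,0)` is coarsely
`log(1 + d(x,y))`, with constant `L` depending only on `ε`. -/
theorem horoball_log_distance :
    ∀ ε : ℝ, 0 < ε → ∃ L : ℝ, 1 ≤ L ∧
      ∀ (Γ : Type) [inst : MetricSpace Γ],
        (∀ x y : Γ, x ≠ y → ε ≤ dist x y) →
        ∀ x y : Γ,
          (1 / L) * Real.log (1 + dist x y) - L ≤
              (pathDist (horoballWeight Γ) (x, 0) (y, 0)).toReal ∧
            (pathDist (horoballWeight Γ) (x, 0) (y, 0)).toReal ≤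
              L * Real.log (1 + dist x y) + L := by
  intro ε _
  refine ⟨3, by norm_num, fun Γ _ _ x y => ?_⟩
  have hlog := log_one_add_dist_nonneg x y
  have hupper := pathDist_horoball_le_log x y
  have hfinite := ne_top_of_le_ne_top ENNReal.ofReal_ne_top hupper
  have hlower := (ENNReal.ofReal_le_iff_le_toReal hfinite).1 (ofReal_log_le_pathDist_horoball x y)
  have hupper_real := ENNReal.toReal_le_of_le_ofReal (by positivity) hupper
  constructor <;> linarith
end

section
/- Let X be a metric space, let P, P' ⊆ X be subsets, let μ ≥ 1, and let g : X → P be a map satisfying: (a) d(g(x), g(y)) ≤ μ·d(x,y) + μ for all x,y ∈ X; (b) d(g(p), p) ≤ μ for all p ∈ P; and (c) d(x, g(x)) + d(g(x), p) ≤ μ·d(x,p) + μ for all x ∈ X and p ∈ P. Then for every r ≥ 0, if x lies in both the closed r-neighborhood of P and the closed r-neighborhood of P', then d(x, g(P')) ≤ 2μ(r+1), i.e., the intersection N_r(P) ∩ N_r(P') is contained in the 2μ(r+1)-neighborhood of g(P'). -/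
/-! For `p ∈ P` and `p' ∈ P'`, the gate property bounds `d(x, g x)` by `μ d(x, p) + μ` and the
coarse Lipschitz bound gives `d(g x, g p') ≤ μ d(x, p') + μ`, so the triangle inequality through
`g x` bounds `d(x, g p')`; taking infima over `p` and `p'` gives the claim. -/

open Metric Set

theorem le_mul_infDist_add {α : Type*} [PseudoMetricSpace α] {s : Set α} (hs : s.Nonempty)
    {x : α} {a b c : ℝ} (hc : 0 ≤ c) (h : ∀ y ∈ s, a ≤ c * dist x y + b) :
    a ≤ c * infDist x s + b := by
  rcases hc.eq_or_lt with rfl | hc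
  · obtain ⟨y, hy⟩ := hs
    simpa using h y hy
  · have hdiv : (a - b) / c ≤ infDist x s :=
      (le_infDist hs).2 fun y hy => by rw [div_le_iff₀ hc]; linarith [h y hy]
    rw [div_le_iff₀ hc] at hdiv
    linarith

theorem dist_gate_le {X : Type*} [PseudoMetricSpace X] {P : Set X} {μ : ℝ} {g : X → X}
    (ha : ∀ x y : X, dist (g x) (g y) ≤ μ * dist x y + μ)
    (hc : ∀ x : X, ∀ p ∈ P, dist x (g x) + dist (g x) p ≤ μ * dist x p + μ)
    (x : X) {p : X} (hp : p ∈ P) (p' : X) :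
    dist x (g p') ≤ μ * dist x p + (μ * dist x p' + 2 * μ) :=
  calc dist x (g p') ≤ dist x (g x) + dist (g x) (g p') := dist_triangle _ _ _
    _ ≤ (μ * dist x p + μ) + (μ * dist x p' + μ) :=
      add_le_add (by linarith [hc x p hp, dist_nonneg (x := g x) (y := p)]) (ha x p')
    _ = μ * dist x p + (μ * dist x p' + 2 * μ) := by ring

theorem gate_coarse_intersection_general {X : Type*} [MetricSpace X]
    (P P' : Set X) (μ : ℝ) (hμ : 1 ≤ μ) (g : X → X)
    (hgP : ∀ x : X, g x ∈ P)
    (ha : ∀ x y : X, dist (g x) (g y) ≤ μ * dist x y + μ)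
    (hc : ∀ x : X, ∀ p ∈ P, dist x (g x) + dist (g x) p ≤ μ * dist x p + μ)
    (r : ℝ) (x : X)
    (hxP : Metric.infDist x P ≤ r) (hxP' : Metric.infDist x P' ≤ r) :
    Metric.infDist x (g '' P') ≤ 2 * μ * (r + 1) := by
  have hμ0 : 0 ≤ μ := by linarith
  rcases P'.eq_empty_or_nonempty with rfl | hP'
  · rw [infDist_empty] at hxP'
    rw [image_empty, infDist_empty]
    positivity
  have hP : P.Nonempty := ⟨g x, hgP x⟩
  have hnear : ∀ p' ∈ P', infDist x (g '' P') ≤ μ * infDist x P + (μ * dist x p' + 2 * μ) :=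
    fun p' hp' => le_mul_infDist_add hP hμ0 fun p hp =>
      (infDist_le_dist_of_mem (mem_image_of_mem g hp')).trans (dist_gate_le ha hc x hp p')
  have hinf : infDist x (g '' P') ≤ μ * infDist x P' + (μ * infDist x P + 2 * μ) :=
    le_mul_infDist_add hP' hμ0 fun p' hp' => by linarith [hnear p' hp']
  linarith [mul_le_mul_of_nonneg_left hxP hμ0, mul_le_mul_of_nonneg_left hxP' hμ0]

/-- if `g : X → P` is a coarse gate map onto `P` (coarsely
Lipschitz, coarsely the identity on `P`, with the coarse gate property), then
every point of the closed `r`-neighborhoods of both `P` and `P'` is within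
`2μ(r+1)` of `g(P')`. -/
theorem gate_coarse_intersection {X : Type*} [MetricSpace X]
    (P P' : Set X) (μ : ℝ) (hμ : 1 ≤ μ) (g : X → X)
    (hgP : ∀ x : X, g x ∈ P)
    (ha : ∀ x y : X, dist (g x) (g y) ≤ μ * dist x y + μ)
    (hb : ∀ p ∈ P, dist (g p) p ≤ μ)
    (hc : ∀ x : X, ∀ p ∈ P, dist x (g x) + dist (g x) p ≤ μ * dist x p + μ)
    (r : ℝ) (hr : 0 ≤ r) (x : X)
    (hxP : Metric.infDist x P ≤ r) (hxP' : Metric.infDist x P' ≤ r) :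
    Metric.infDist x (g '' P') ≤ 2 * μ * (r + 1) :=
  gate_coarse_intersection_general P P' μ hμ g hgP ha hc r x hxP hxP'
end
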